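/- Let a_0, …, a_n ∈ ℂ be pairwise distinct and nonzero, let h(z) := ∏_{k=0}^{n} (z − a_k), and define π(u,v,z) := (½(|u|² − |v|²), |z|). Fix 1 ≤ i ≤ n, assume |a_{i−1}| ≤ |a_i|, and let c ⊆ ℂ be a compact connected set with a_{i−1} ∈ c, a_i ∈ c, and |a_{i−1}| ≤ |z| ≤ |a_i| for every z ∈ c. Define L_c := {(u,v,z) ∈ ℂ³ : u·v = h(z), |u| = |v|, z ∈ c}. Then π(L_c) = {0} × [|a_{i−1}|, |a_i|]. -/

import Mathlib

/-!
On `L_c` the moment coordinate `½(|u|² − |v|²)` vanishes identically, and over every `z ∈ c`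
the fibre of `L_c` is nonempty: take `u = v` a square root of `h(z)`. Hence `π(L_c) = {0} × |c|`,
and `|c| = [|a_{i−1}|, |a_i|]` by the intermediate value theorem on the connected set `c`.
-/

open Set

theorem image_moment_map_eq_prod_image_norm (f : ℂ → ℂ) (c : Set ℂ) :
    (fun w : ℂ × ℂ × ℂ => ((1/2) * ((‖w.1‖)^2 - (‖w.2.1‖)^2), ‖w.2.2‖)) ''
      {w : ℂ × ℂ × ℂ | w.1 * w.2.1 = f w.2.2 ∧ ‖w.1‖ = ‖w.2.1‖ ∧ w.2.2 ∈ c}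
    = {(0:ℝ)} ×ˢ (norm '' c) := by
  ext ⟨x, r⟩
  simp only [mem_image, mem_ofPred_eq, mem_prod, mem_singleton_iff, Prod.mk.injEq,
    Prod.exists]
  constructor
  · rintro ⟨u, v, z, ⟨-, huv, hz⟩, rfl, rfl⟩
    exact ⟨by rw [huv]; ring, z, hz, rfl⟩
  · rintro ⟨rfl, z, hz, rfl⟩
    obtain ⟨u, hu⟩ := IsAlgClosed.exists_eq_mul_self (f z)
    exact ⟨u, u, z, ⟨hu.symm, rfl, hz⟩, by ring, rfl⟩

theorem IsPreconnected.image_eq_Icc {X : Type*} [TopologicalSpace X] {s : Set X}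
    (hs : IsPreconnected s) {f : X → ℝ} (hf : ContinuousOn f s) {x y : X}
    (hx : x ∈ s) (hy : y ∈ s) (hbound : ∀ z ∈ s, f x ≤ f z ∧ f z ≤ f y) :
    f '' s = Icc (f x) (f y) :=
  (hs.intermediate_value hx hy hf).antisymm' <| image_subset_iff.mpr fun z hz => hbound z hz

/-- For `h(z) = ∏ (z − a k)` with the `a k` pairwise distinct and
nonzero, the Lagrangian fibration `π(u,v,z) = (½(|u|²−|v|²), |z|)` maps the
Khovanov–Seidel Lagrangian sphere `L_c = {uv = h(z), |u| = |v|, z ∈ c}` over a matching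
curve `c` joining `a (i−1)` and `a i` (with `|a (i−1)| ≤ |z| ≤ |a i|` on `c`) onto the
segment `{0} × [|a (i−1)|, |a i|]`. -/
theorem lagrangian_sphere_image (n : ℕ) (a : Fin (n+1) → ℂ)
    (i : ℕ) (hi1 : 1 ≤ i) (hi2 : i ≤ n)
    (c : Set ℂ) (hconn : IsConnected c)
    (hmem1 : a ⟨i-1, by omega⟩ ∈ c) (hmem2 : a ⟨i, by omega⟩ ∈ c)
    (hmod : ∀ z ∈ c, ‖a ⟨i-1, by omega⟩‖ ≤ ‖z‖ ∧
      ‖z‖ ≤ ‖a ⟨i, by omega⟩‖) :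
    (fun w : ℂ × ℂ × ℂ =>
        ((1/2) * ((‖w.1‖)^2 - (‖w.2.1‖)^2), ‖w.2.2‖)) ''
      {w : ℂ × ℂ × ℂ | w.1 * w.2.1 = ∏ k, (w.2.2 - a k) ∧
        ‖w.1‖ = ‖w.2.1‖ ∧ w.2.2 ∈ c}
    = {(0:ℝ)} ×ˢ Set.Icc (‖a ⟨i-1, by omega⟩‖)
        (‖a ⟨i, by omega⟩‖) := by
  rw [image_moment_map_eq_prod_image_norm (fun z => ∏ k, (z - a k)) c,
    hconn.isPreconnected.image_eq_Icc continuous_norm.continuousOn hmem1 hmem2 hmod]
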